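/- Let s ≥ 1, p ∈ (1,∞) with 1/p + 1/p* = 1, γ_j > 0 for j = 1,...,s, and m = 1/(p*+1)^{1/p*}. Then sup over c_1,...,c_s ≥ 0 of ∏_{j=1}^s ((c_j^p + (1 + c_j γ_j m)^p)/(1 + c_j^p))^{1/p} is at least ∏_{j=1}^s (1 + γ_j ((p-1)/(p*+1))^{1/p*})^{1/p}. -/
import Mathlib

open Real

/-- Uniform bound on each factor, used for `BddAbove`. -/
lemma factor_aux_bound (p : ℝ) (hp : 1 < p) (a c : ℝ) (hc : 0 ≤ c) (ha : 0 ≤ a) :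
    (c ^ p + (1 + c * a) ^ p) / (1 + c ^ p) ≤ 1 + (2 * (1 + a)) ^ p := by
  have hp0 : (0:ℝ) ≤ p := by linarith
  have hcp : (0:ℝ) ≤ c ^ p := rpow_nonneg hc p
  have hT : (0:ℝ) ≤ (2 * (1 + a)) ^ p := rpow_nonneg (by positivity) p
  have hden : (0:ℝ) < 1 + c ^ p := by linarith
  rw [div_le_iff₀ hden]
  have h2 : (1 + c * a) ^ p ≤ (2 * (1 + a)) ^ p * (1 + c ^ p) := by
    rcases le_total c 1 with h | h
    · have h3 : (1 + c * a) ^ p ≤ (2 * (1 + a)) ^ p :=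
        rpow_le_rpow (by positivity) (by nlinarith) hp0
      nlinarith
    · have h3 : (1 + c * a) ^ p ≤ (2 * (1 + a) * c) ^ p :=
        rpow_le_rpow (by positivity) (by nlinarith) hp0
      rw [mul_rpow (by positivity) hc] at h3
      nlinarith
  nlinarith

theorem product_weight_sup_lower_bound (s : ℕ) (hs : 1 ≤ s) (p pstar : ℝ)
    (hp : 1 < p) (hconj : 1 / p + 1 / pstar = 1) (γ : ℕ → ℝ)
    (hγ : ∀ j ∈ Finset.Icc 1 s, 0 < γ j) (m : ℝ)
    (hm : m = 1 / (pstar + 1) ^ (1 / pstar)) :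
    sSup {r : ℝ | ∃ c : ℕ → ℝ, (∀ j ∈ Finset.Icc 1 s, 0 ≤ c j) ∧
        r = ∏ j ∈ Finset.Icc 1 s,
            (((c j) ^ p + (1 + c j * γ j * m) ^ p) / (1 + (c j) ^ p)) ^ (1 / p)}
      ≥ ∏ j ∈ Finset.Icc 1 s,
          (1 + γ j * ((p - 1) / (pstar + 1)) ^ (1 / pstar)) ^ (1 / p) := by
  have hp0 : (0:ℝ) < p := lt_trans one_pos hp
  have hp1 : (0:ℝ) < p - 1 := by linarith
  have hpsne : pstar ≠ 0 := by
    intro h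
    rw [h, div_zero, add_zero] at hconj
    have : p = 1 := by
      field_simp at hconj
      linarith
    linarith
  have hps : pstar = p / (p - 1) := by
    field_simp at hconj
    field_simp
    linarith
  have hpspos : (0:ℝ) < pstar := hps ▸ div_pos hp0 hp1
  have hps1 : (0:ℝ) < pstar + 1 := by linarith
  have hinvps : 1 / pstar = 1 - 1 / p := by linarith
  have hm0 : 0 < m := by
    rw [hm]
    positivity
  set A : ℝ := ((p - 1) / (pstar + 1)) ^ (1 / pstar) with hA
  have hA0 : (0:ℝ) ≤ A := rpow_nonneg (by positivity) _
  set c0 : ℝ := (p - 1) ^ (-(1 / p)) with hc0def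
  have hc0 : 0 < c0 := rpow_pos_of_pos hp1 _
  have hc0p : c0 ^ p = (p - 1)⁻¹ := by
    rw [hc0def, ← Real.rpow_mul hp1.le,
      show -(1/p) * p = -1 by field_simp, rpow_neg_one]
  have hkey : (p - 1) * c0 * m = A := by
    have hne : (1:ℝ) + -(1/p) ≠ 0 := by
      have h5 : 1/p < 1 := by rw [div_lt_one hp0]; exact hp
      intro hcon; linarith
    have h1 : (p - 1) * c0 = (p - 1) ^ (1 / pstar) := by
      rw [hc0def, ← Real.rpow_one_add' hp1.le hne]
      congr 1
      rw [hinvps]; ring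
    have h2 : m = ((pstar + 1)⁻¹) ^ (1 / pstar) := by
      rw [hm, Real.inv_rpow hps1.le, one_div]
    rw [h1, h2, ← Real.mul_rpow hp1.le (by positivity), hA]
    congr 1
  have hden : (0:ℝ) < 1 + c0 ^ p := by
    rw [hc0p]; positivity
  -- pointwise lower bound for the witness factors
  have hfac : ∀ j ∈ Finset.Icc 1 s, (1 + γ j * A) ^ (1 / p) ≤
      ((c0 ^ p + (1 + c0 * γ j * m) ^ p) / (1 + c0 ^ p)) ^ (1 / p) := by
    intro j hj
    have hg : 0 < γ j := hγ j hj
    have hx : (0:ℝ) ≤ c0 * γ j * m := by positivity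
    have hbern : 1 + p * (c0 * γ j * m) ≤ (1 + c0 * γ j * m) ^ p :=
      one_add_mul_self_le_rpow_one_add (by linarith) hp.le
    apply rpow_le_rpow (by positivity) ?_ (by positivity)
    rw [le_div_iff₀ hden]
    rw [hc0p, ← hkey]
    have h1 : (1 + γ j * ((p-1) * c0 * m)) * (1 + (p-1)⁻¹)
        = (p-1)⁻¹ + (1 + p * (c0 * γ j * m)) := by
      field_simp
      ring
    rw [h1]
    linarith
  set S : Set ℝ := {r : ℝ | ∃ c : ℕ → ℝ, (∀ j ∈ Finset.Icc 1 s, 0 ≤ c j) ∧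
      r = ∏ j ∈ Finset.Icc 1 s,
          (((c j) ^ p + (1 + c j * γ j * m) ^ p) / (1 + (c j) ^ p)) ^ (1 / p)} with hS
  have hbdd : BddAbove S := by
    refine ⟨∏ j ∈ Finset.Icc 1 s, (1 + (2 * (1 + γ j * m)) ^ p) ^ (1 / p), ?_⟩
    rintro r ⟨c, hcnn, rfl⟩
    apply Finset.prod_le_prod
    · intro j hj
      have hcj := hcnn j hj
      have hg := hγ j hj
      have : (0:ℝ) ≤ ((c j) ^ p + (1 + c j * γ j * m) ^ p) / (1 + (c j) ^ p) := by
        have h1 : (0:ℝ) ≤ (c j) ^ p := rpow_nonneg hcj p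
        have h2 : (0:ℝ) ≤ (1 + c j * γ j * m) ^ p := rpow_nonneg (by positivity) p
        positivity
      exact rpow_nonneg this _
    · intro j hj
      have hcj := hcnn j hj
      have hg := hγ j hj
      rw [mul_assoc (c j) (γ j) m]
      have h1 : (0:ℝ) ≤ (c j) ^ p := rpow_nonneg hcj p
      have h2 : (0:ℝ) ≤ (1 + c j * (γ j * m)) ^ p := rpow_nonneg (by positivity) p
      have h3 : (0:ℝ) ≤ ((c j) ^ p + (1 + c j * (γ j * m)) ^ p) / (1 + (c j) ^ p) :=
        div_nonneg (by linarith) (by linarith)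
      exact rpow_le_rpow h3
        (factor_aux_bound p hp (γ j * m) (c j) hcj (by positivity)) (by positivity)
  have hmem : (∏ j ∈ Finset.Icc 1 s,
      ((c0 ^ p + (1 + c0 * γ j * m) ^ p) / (1 + c0 ^ p)) ^ (1 / p)) ∈ S := by
    exact ⟨fun _ => c0, fun j _ => hc0.le, rfl⟩
  calc ∏ j ∈ Finset.Icc 1 s, (1 + γ j * ((p - 1) / (pstar + 1)) ^ (1 / pstar)) ^ (1 / p)
      ≤ ∏ j ∈ Finset.Icc 1 s,
          ((c0 ^ p + (1 + c0 * γ j * m) ^ p) / (1 + c0 ^ p)) ^ (1 / p) := by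
        apply Finset.prod_le_prod
        · intro j hj
          have hg := hγ j hj
          exact rpow_nonneg (by positivity) _
        · exact hfac
    _ ≤ sSup S := le_csSup hbdd hmem
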